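/- Let x, y ∈ ℝ^q with all entries in [0, π/2], let v be a unitary q×q complex matrix and w a complex q×q matrix with operator norm ‖w‖ ≤ 1. Set ξ := cos(x̲)·v·cos(y̲) - sin(x̲)·w·sin(y̲), where x̲ = diag(x_1,...,x_q). Then the smallest singular value of ξ satisfies σ_q(ξ) ≥ cos(‖x‖_∞ + ‖y‖_∞), provided ‖x‖_∞ + ‖y‖_∞ ≤ π. -/

import Mathlib

open Real

/-- The largest singular value of a complex q×q matrix: the supremum of ‖Av‖ over
unit vectors v. -/
noncomputable def sMax (q : ℕ) (A : Matrix (Fin q) (Fin q) ℂ) : ℝ :=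
  ⨆ v : Metric.sphere (0 : EuclideanSpace ℂ (Fin q)) 1, ‖Matrix.toEuclideanLin A ↑v‖

/-- The smallest singular value of a complex q×q matrix: the infimum of ‖Av‖ over
unit vectors v. -/
noncomputable def sMin (q : ℕ) (A : Matrix (Fin q) (Fin q) ℂ) : ℝ :=
  ⨅ v : Metric.sphere (0 : EuclideanSpace ℂ (Fin q)) 1, ‖Matrix.toEuclideanLin A ↑v‖

/-!
Write `a = ‖x‖` and `b = ‖y‖`. On a unit vector `u`, the norm of `cos x̲ · v · cos y̲ u` is at
least `cos a · cos b`, because a diagonal matrix whose entries have modulus `≥ c` stretches every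
vector by at least `c` and `v` is an isometry. The norm of `sin x̲ · w · sin y̲ u` is at most
`sin a · sin b` by submultiplicativity of the operator norm. The reverse triangle inequality and
`cos (a + b) = cos a cos b - sin a sin b` give the bound.
-/

open Matrix
open scoped Matrix.Norms.L2Operator

namespace Matrix

variable {𝕜 n : Type*} [RCLike 𝕜] [Fintype n] [DecidableEq n]

theorem mul_norm_le_norm_toEuclideanCLM_diagonal {d : n → 𝕜} {c : ℝ} (hc : 0 ≤ c)
    (hd : ∀ i, c ≤ ‖d i‖) (z : EuclideanSpace 𝕜 n) :
    c * ‖z‖ ≤ ‖toEuclideanCLM (𝕜 := 𝕜) (diagonal d) z‖ := by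
  refine (sq_le_sq₀ (by positivity) (norm_nonneg _)).mp ?_
  simp only [mul_pow, EuclideanSpace.norm_sq_eq, ofLp_toEuclideanCLM, mulVec_diagonal, norm_mul,
    Finset.mul_sum]
  gcongr with i
  exact hd i

theorem mul_mul_norm_le_norm_toEuclideanCLM_diagonal_mul_unitary_mul_diagonal
    {d e : n → 𝕜} {c c' : ℝ} (hc : 0 ≤ c) (hc' : 0 ≤ c') (hd : ∀ i, c ≤ ‖d i‖)
    (he : ∀ i, c' ≤ ‖e i‖) {v : Matrix n n 𝕜} (hv : v ∈ unitaryGroup n 𝕜)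
    (z : EuclideanSpace 𝕜 n) :
    c * c' * ‖z‖ ≤ ‖toEuclideanCLM (𝕜 := 𝕜) (diagonal d * v * diagonal e) z‖ := by
  have hvU := Unitary.map_mem (toEuclideanCLM (𝕜 := 𝕜) (n := n)) hv
  calc c * c' * ‖z‖ ≤ c * ‖toEuclideanCLM (𝕜 := 𝕜) (diagonal e) z‖ := by
        rw [mul_assoc]
        exact mul_le_mul_of_nonneg_left (mul_norm_le_norm_toEuclideanCLM_diagonal hc' he z) hc
    _ = c * ‖toEuclideanCLM (𝕜 := 𝕜) v (toEuclideanCLM (𝕜 := 𝕜) (diagonal e) z)‖ := by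
        rw [ContinuousLinearMap.norm_map_of_mem_unitary hvU]
    _ ≤ _ := by
        rw [map_mul, map_mul]
        exact mul_norm_le_norm_toEuclideanCLM_diagonal hc hd _

theorem norm_toEuclideanCLM_diagonal_mul_mul_diagonal_le (d e : n → 𝕜) (w : Matrix n n 𝕜)
    (z : EuclideanSpace 𝕜 n) :
    ‖toEuclideanCLM (𝕜 := 𝕜) (diagonal d * w * diagonal e) z‖ ≤ ‖d‖ * ‖w‖ * ‖e‖ * ‖z‖ :=
  calc _ ≤ ‖diagonal d * w * diagonal e‖ * ‖z‖ := ContinuousLinearMap.le_opNorm _ z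
    _ ≤ ‖d‖ * ‖w‖ * ‖e‖ * ‖z‖ := by
        rw [← l2_opNorm_diagonal d, ← l2_opNorm_diagonal e]
        gcongr
        exact norm_mul₃_le

end Matrix

theorem sMax_eq_l2_opNorm (q : ℕ) (A : Matrix (Fin q) (Fin q) ℂ) : sMax q A = ‖A‖ := by
  rw [sMax, ← sSup_image' (f := fun v => ‖toEuclideanLin A v‖), ← l2_opNorm_toEuclideanCLM,
    ← ContinuousLinearMap.sSup_sphere_eq_norm]
  rfl

theorem le_sMin {q : ℕ} (hq : 0 < q) {A : Matrix (Fin q) (Fin q) ℂ} {c : ℝ}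
    (h : ∀ u : EuclideanSpace ℂ (Fin q), ‖u‖ = 1 → c ≤ ‖toEuclideanCLM (𝕜 := ℂ) A u‖) :
    c ≤ sMin q A := by
  have : NeZero q := ⟨hq.ne'⟩
  have : Nonempty (Metric.sphere (0 : EuclideanSpace ℂ (Fin q)) 1) :=
    (NormedSpace.sphere_nonempty.mpr zero_le_one).to_subtype
  exact le_ciInf fun u => h u (mem_sphere_zero_iff_norm.mp u.2)

section

variable {ι : Type*} [Fintype ι] {x : ι → ℝ}

theorem norm_le_pi_div_two_of_forall_mem_Icc (hx : ∀ i, x i ∈ Set.Icc 0 (π / 2)) :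
    ‖x‖ ≤ π / 2 :=
  (pi_norm_le_iff_of_nonneg (by positivity)).2 fun i => by
    rw [Real.norm_eq_abs, abs_of_nonneg (hx i).1]
    exact (hx i).2

theorem cos_norm_nonneg_of_forall_mem_Icc (hx : ∀ i, x i ∈ Set.Icc 0 (π / 2)) : 0 ≤ cos ‖x‖ :=
  cos_nonneg_of_mem_Icc
    ⟨by linarith [norm_nonneg x, pi_pos], norm_le_pi_div_two_of_forall_mem_Icc hx⟩

theorem cos_norm_le_norm_ofReal_cos (hx : ∀ i, x i ∈ Set.Icc 0 (π / 2)) (i : ι) :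
    cos ‖x‖ ≤ ‖(cos (x i) : ℂ)‖ := by
  have hxi : x i ≤ ‖x‖ := (le_abs_self _).trans (norm_le_pi_norm x i)
  rw [Complex.norm_real, Real.norm_eq_abs]
  exact (cos_le_cos_of_nonneg_of_le_pi (hx i).1
    (by linarith [norm_le_pi_div_two_of_forall_mem_Icc hx, pi_pos]) hxi).trans (le_abs_self _)

theorem norm_ofReal_sin_le_sin_norm (hx : ∀ i, x i ∈ Set.Icc 0 (π / 2)) :
    ‖fun i => (sin (x i) : ℂ)‖ ≤ sin ‖x‖ := by
  have hxπ := norm_le_pi_div_two_of_forall_mem_Icc hx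
  refine (pi_norm_le_iff_of_nonneg
    (sin_nonneg_of_nonneg_of_le_pi (norm_nonneg x) (by linarith [pi_pos]))).2 fun i => ?_
  have hxi : x i ≤ ‖x‖ := (le_abs_self _).trans (norm_le_pi_norm x i)
  rw [Complex.norm_real, Real.norm_eq_abs,
    abs_of_nonneg (sin_nonneg_of_nonneg_of_le_pi (hx i).1 (by linarith [(hx i).2, pi_pos]))]
  exact sin_le_sin_of_le_of_le_pi_div_two (by linarith [(hx i).1, pi_pos]) hxπ hxi

end

theorem sMin_xi_ge_general (q : ℕ) (hq : 0 < q) (x y : Fin q → ℝ)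
    (hx : ∀ i, x i ∈ Set.Icc 0 (π / 2)) (hy : ∀ i, y i ∈ Set.Icc 0 (π / 2))
    (v : Matrix (Fin q) (Fin q) ℂ) (hv : v ∈ Matrix.unitaryGroup (Fin q) ℂ)
    (w : Matrix (Fin q) (Fin q) ℂ) (hw : sMax q w ≤ 1) :
    Real.cos (‖x‖ + ‖y‖) ≤
      sMin q (Matrix.diagonal (fun i => (Real.cos (x i) : ℂ)) * v *
          Matrix.diagonal (fun i => (Real.cos (y i) : ℂ)) -
        Matrix.diagonal (fun i => (Real.sin (x i) : ℂ)) * w *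
          Matrix.diagonal (fun i => (Real.sin (y i) : ℂ))) := by
  rw [sMax_eq_l2_opNorm] at hw
  refine le_sMin hq fun u hu => ?_
  have hcos := mul_mul_norm_le_norm_toEuclideanCLM_diagonal_mul_unitary_mul_diagonal
    (cos_norm_nonneg_of_forall_mem_Icc hx) (cos_norm_nonneg_of_forall_mem_Icc hy)
    (cos_norm_le_norm_ofReal_cos hx) (cos_norm_le_norm_ofReal_cos hy) hv u
  have hsin : ‖toEuclideanCLM (𝕜 := ℂ) (diagonal (fun i => (sin (x i) : ℂ)) * w *
      diagonal (fun i => (sin (y i) : ℂ))) u‖ ≤ sin ‖x‖ * 1 * sin ‖y‖ * ‖u‖ := by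
    have hsx := norm_ofReal_sin_le_sin_norm hx
    have hsx_nonneg : 0 ≤ sin ‖x‖ := (norm_nonneg _).trans hsx
    grw [norm_toEuclideanCLM_diagonal_mul_mul_diagonal_le, hsx, hw, norm_ofReal_sin_le_sin_norm hy]
  rw [hu, mul_one] at hcos
  rw [hu, mul_one, mul_one] at hsin
  calc cos (‖x‖ + ‖y‖) = cos ‖x‖ * cos ‖y‖ - sin ‖x‖ * sin ‖y‖ := cos_add _ _
    _ ≤ _ := sub_le_sub hcos hsin
    _ ≤ _ := norm_sub_norm_le _ _
    _ = _ := by rw [map_sub]; rfl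

/-- For x, y ∈ [0,π/2]^q, v unitary and ‖w‖ ≤ 1, the smallest singular value of
ξ = cos x̲ · v · cos y̲ - sin x̲ · w · sin y̲ is at least cos(‖x‖_∞ + ‖y‖_∞). -/
theorem sMin_xi_ge (q : ℕ) (hq : 0 < q) (x y : Fin q → ℝ)
    (hx : ∀ i, x i ∈ Set.Icc 0 (π / 2)) (hy : ∀ i, y i ∈ Set.Icc 0 (π / 2))
    (v : Matrix (Fin q) (Fin q) ℂ) (hv : v ∈ Matrix.unitaryGroup (Fin q) ℂ)
    (w : Matrix (Fin q) (Fin q) ℂ) (hw : sMax q w ≤ 1)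
    (hsum : ‖x‖ + ‖y‖ ≤ π) :
    Real.cos (‖x‖ + ‖y‖) ≤
      sMin q (Matrix.diagonal (fun i => (Real.cos (x i) : ℂ)) * v *
          Matrix.diagonal (fun i => (Real.cos (y i) : ℂ)) -
        Matrix.diagonal (fun i => (Real.sin (x i) : ℂ)) * w *
          Matrix.diagonal (fun i => (Real.sin (y i) : ℂ))) :=
  sMin_xi_ge_general q hq x y hx hy v hv w hw
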